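/- arXiv:2001.00204 — 4 statements merged into one kernel-verified Lean document; each statement's English description precedes it below -/
import Mathlib

section
/- Let T be a rooted tree obtained by depth-first search from a cactus graph G, where each simple cycle of G corresponds to a vertical path from a start node x to an end node y in T. If a node v lies on the paths of two distinct cycles C(x,y) and C(x',y') of T, then v = x or v = x'. -/
/-!
Call `x` a dominator of `z` (from `r`) if every `r`–`z` path passes through `x`; in a rooted
tree this is the ancestor relation. If `x` dominates every vertex of a path `p` from `x` to
`v`, then a root path to `x` followed by `p` is again a path, so any dominator `x'` of `v` lies
on the root path to `x` or on `p`. Applying this on both cycles at the common vertex `v` puts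
`x'` on the cycle of `x`, or `x` on the cycle of `x'`, or makes `x = x'`; the cactus property
then forces `v` to be that start node.
-/

namespace SimpleGraph

variable {V : Type*} {G : SimpleGraph V}

def Dominates (G : SimpleGraph V) (r x z : V) : Prop :=
  ∀ q : G.Path r z, x ∈ q.1.support

namespace Walk

lemma IsPath.append_of_support_inter {r x v : V} {q : G.Walk r x} {p : G.Walk x v}
    (hq : q.IsPath) (hp : p.IsPath) (h : ∀ w ∈ p.support, w ∈ q.support → w = x) :
    (q.append p).IsPath := by
  rw [isPath_def, support_append, List.nodup_append]
  refine ⟨hq.support_nodup, hp.support_nodup.tail, ?_⟩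
  rintro w hwq _ hwp rfl
  have hx : x ∉ p.support.tail :=
    (List.nodup_cons.mp (p.cons_tail_support ▸ hp.support_nodup)).1
  exact hx (h w (List.mem_of_mem_tail hwp) hwq ▸ hwp)

variable [DecidableEq V]

lemma IsPath.eq_of_mem_support_takeUntil {r x w : V} {q : G.Walk r x} (hq : q.IsPath)
    (hw : w ∈ q.support) (hx : x ∈ (q.takeUntil w hw).support) : x = w := by
  by_contra hxw
  exact endpoint_notMem_support_takeUntil hq hw hxw hx

lemma IsPath.mem_support_or_mem_support_of_dominates {r x x' v : V} {q : G.Walk r x}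
    {p : G.Walk x v} (hq : q.IsPath) (hp : p.IsPath) (hdom : ∀ z ∈ p.support, G.Dominates r x z)
    (hx' : G.Dominates r x' v) : x' ∈ q.support ∨ x' ∈ p.support := by
  have hpath : (q.append p).IsPath := by
    refine hq.append_of_support_inter hp fun w hwp hwq ↦ ?_
    exact (hq.eq_of_mem_support_takeUntil hwq
      (hdom w hwp ⟨q.takeUntil w hwq, hq.takeUntil hwq⟩)).symm
  exact (mem_support_append_iff _ _).mp (hx' ⟨_, hpath⟩)

end Walk

end SimpleGraph

open SimpleGraph Walk

theorem stmt_1_general {V : Type*} [DecidableEq V] (T : SimpleGraph V)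
    (hT : T.IsTree) (r : V) (x y x' y' v : V)
    (p : T.Path x y) (p' : T.Path x' y')
    -- `x` is the start node of `C(x,y)`: it is an ancestor of every vertex of the path
    (hanc : ∀ z ∈ p.1.support, ∀ q : T.Path r z, x ∈ q.1.support)
    (hanc' : ∀ z ∈ p'.1.support, ∀ q : T.Path r z, x' ∈ q.1.support)
    -- cactus property: the two cycles share at most one vertex
    (hcactus : (p.1.support.toFinset ∩ p'.1.support.toFinset).card ≤ 1)
    (hv : v ∈ p.1.support) (hv' : v ∈ p'.1.support) :
    v = x ∨ v = x' := by
  have eq_of_mem : ∀ a ∈ p.1.support, a ∈ p'.1.support → v = a := fun a ha ha' ↦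
    Finset.card_le_one.mp hcactus v (by simp [hv, hv']) a (by simp [ha, ha'])
  have hdom : ∀ z ∈ (p.1.takeUntil v hv).support, T.Dominates r x z := fun z hz ↦
    hanc z (support_takeUntil_subset_support _ hv hz)
  have hdom' : ∀ z ∈ (p'.1.takeUntil v hv').support, T.Dominates r x' z := fun z hz ↦
    hanc' z (support_takeUntil_subset_support _ hv' hz)
  let qx : T.Path r x := (hT.connected.preconnected r x).some.toPath
  rcases qx.2.mem_support_or_mem_support_of_dominates (p.2.takeUntil hv) hdom (hanc' v hv')
    with hx'qx | hx'p
  · -- taking the root path to `x'` inside `qx` means that `x` on it can only be its end `x'`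
    rcases (qx.2.takeUntil hx'qx).mem_support_or_mem_support_of_dominates (p'.2.takeUntil hv')
      hdom' (hanc v hv) with hxq | hxp'
    · have hxx' : x = x' := qx.2.eq_of_mem_support_takeUntil hx'qx hxq
      exact Or.inl (eq_of_mem x p.1.start_mem_support (hxx' ▸ p'.1.start_mem_support))
    · exact Or.inl (eq_of_mem x p.1.start_mem_support
        (support_takeUntil_subset_support _ hv' hxp'))
  · exact Or.inr (eq_of_mem x' (support_takeUntil_subset_support _ hv hx'p)
      p'.1.start_mem_support)

/-- `T` is the DFS tree of a cactus graph `G` rooted at `r`.  A cycle `C(x,y)` of the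
cactus is represented by the tree path from the start node `x` (an ancestor) to the
end node `y`.  Being an ancestor is expressed by lying on the (unique) tree path from
the root.  The cactus property gives that the two cycle paths share at most one
vertex.  If `v` lies on both cycle paths, then `v = x` or `v = x'`. -/
theorem stmt_1 {V : Type*} [Fintype V] [DecidableEq V] (T : SimpleGraph V)
    (hT : T.IsTree) (r : V) (x y x' y' v : V)
    (p : T.Path x y) (p' : T.Path x' y')
    -- `x` is the start node of `C(x,y)`: it is an ancestor of every vertex of the path
    (hanc : ∀ z ∈ p.1.support, ∀ q : T.Path r z, x ∈ q.1.support)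
    (hanc' : ∀ z ∈ p'.1.support, ∀ q : T.Path r z, x' ∈ q.1.support)
    -- the two cycles are distinct
    (hne : (x, y) ≠ (x', y'))
    -- cactus property: the two cycles share at most one vertex
    (hcactus : (p.1.support.toFinset ∩ p'.1.support.toFinset).card ≤ 1)
    (hv : v ∈ p.1.support) (hv' : v ∈ p'.1.support) :
    v = x ∨ v = x' :=
  stmt_1_general T hT r x y x' y' v p p' hanc hanc' hcactus hv hv'
end

section
/- Every connected partition of a cycle graph C on m vertices (m ≥ 3) is a connected partition of at least one of the m paths obtained from C by deleting a single edge; moreover, unless all vertices lie in one block, it is a connected partition of at least two such paths. -/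
/-!
Deleting an edge whose endpoints lie in different blocks leaves every induced block unchanged.
Walking once around the cycle, the block changes either never, and then the only block is the
whole cycle, which stays connected after deleting any edge, or at least twice, since one change
alone could not bring the walk back to the block it started in.
-/

open SimpleGraph Finset
open Fin.CommRing

namespace SimpleGraph

variable {V : Type*}

lemma induce_deleteEdges_singleton_eq {G : SimpleGraph V} {s : Set V} {u v : V}
    (huv : ¬(u ∈ s ∧ v ∈ s)) : (G.deleteEdges {s(u, v)}).induce s = G.induce s := by
  ext ⟨x, hx⟩ ⟨y, hy⟩
  simp only [comap_adj, Function.Embedding.subtype_apply, deleteEdges_adj,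
    Set.mem_singleton_iff, and_iff_left_iff_imp]
  rintro - h
  rcases Sym2.eq_iff.1 h with ⟨rfl, rfl⟩ | ⟨rfl, rfl⟩
  · exact huv ⟨hx, hy⟩
  · exact huv ⟨hy, hx⟩

lemma cycleGraph_adj_add_one {n : ℕ} (i : Fin (n + 2)) : (cycleGraph (n + 2)).Adj i (i + 1) := by
  simp [cycleGraph_adj]

lemma cycleGraph_deleteEdges_connected (n : ℕ) :
    ((cycleGraph (n + 3)).deleteEdges {s(0, Fin.last (n + 2))}).Connected := by
  refine cycleGraph_connected.connected_delete_edge_of_not_isBridge fun hbridge => ?_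
  exact hbridge.notMem_edges_of_isCycle (cycleGraph.isCycle_cycle (n := n))
    (by simp [cycleGraph.cycle])

end SimpleGraph

lemma Fin.sym2_mk_add_one_injective (n : ℕ) :
    Function.Injective fun i : Fin (n + 3) => s(i, i + 1) := by
  intro i j hij
  rcases Sym2.eq_iff.1 hij with ⟨h, -⟩ | ⟨rfl, h⟩
  · exact h
  · have h2 : ((2 : ℕ) : Fin (n + 3)) = 0 := by push_cast; linear_combination h
    have := Nat.le_of_dvd two_pos (Fin.natCast_eq_zero.1 h2)
    omega

lemma Fin.apply_eq_apply_of_forall_ne_add_one {α : Type*} {m : ℕ} [NeZero m] {f : Fin m → α} {i : Fin m}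
    (h : ∀ j ≠ i, f (j + 1) = f j) (x y : Fin m) : f x = f y := by
  have hk : ∀ k : ℕ, k < m → f (i + 1 + k) = f (i + 1) := by
    intro k
    induction k with
    | zero => simp
    | succ k ih =>
      intro hk
      have hne : i + 1 + k ≠ i := fun he => by
        have h0 : ((k + 1 : ℕ) : Fin m) = 0 := by push_cast; linear_combination he
        have := Nat.le_of_dvd k.succ_pos (Fin.natCast_eq_zero.1 h0)
        omega
      rw [← ih (by omega), ← h _ hne]
      push_cast; ring_nf
  have hx := hk (x - (i + 1)).val (x - (i + 1)).isLt
  have hy := hk (y - (i + 1)).val (y - (i + 1)).isLt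
  simp only [Fin.cast_val_eq_self, add_sub_cancel] at hx hy
  rw [hx, hy]

lemma Finpartition.induce_deleteEdges_eq_of_part_ne {α : Type*} [DecidableEq α] {s : Finset α}
    (P : Finpartition s) (G : SimpleGraph α) {u v : α} (huv : P.part u ≠ P.part v)
    {b : Finset α} (hb : b ∈ P.parts) :
    (G.deleteEdges {s(u, v)}).induce (b : Set α) = G.induce b :=
  induce_deleteEdges_singleton_eq fun ⟨hu, hv⟩ =>
    huv ((P.part_eq_of_mem hb hu).trans (P.part_eq_of_mem hb hv).symm)

/-- Every connected partition of the cycle graph on `m ≥ 3` vertices is a connected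
partition of at least one of the `m` Hamiltonian paths obtained by deleting a single
edge; unless all vertices lie in one block, it is a connected partition of at least two
such paths. -/
theorem stmt_10 (m : ℕ) (hm : 3 ≤ m)
    (P : Finpartition (Finset.univ : Finset (Fin m)))
    (hconn : ∀ b ∈ P.parts, ((SimpleGraph.cycleGraph m).induce (b : Set (Fin m))).Connected) :
    (∃ e ∈ (SimpleGraph.cycleGraph m).edgeSet,
      ∀ b ∈ P.parts,
        (((SimpleGraph.cycleGraph m).deleteEdges {e}).induce (b : Set (Fin m))).Connected) ∧
    (P.parts.card ≠ 1 →
      ∃ e₁ ∈ (SimpleGraph.cycleGraph m).edgeSet,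
        ∃ e₂ ∈ (SimpleGraph.cycleGraph m).edgeSet, e₁ ≠ e₂ ∧
        (∀ b ∈ P.parts,
          (((SimpleGraph.cycleGraph m).deleteEdges {e₁}).induce (b : Set (Fin m))).Connected) ∧
        (∀ b ∈ P.parts,
          (((SimpleGraph.cycleGraph m).deleteEdges {e₂}).induce (b : Set (Fin m))).Connected)) := by
  obtain ⟨n, rfl⟩ : ∃ n, m = n + 3 := ⟨m - 3, by omega⟩
  by_cases hall : ∀ i : Fin (n + 3), P.part (i + 1) = P.part i
  · have hconst := Fin.apply_eq_apply_of_forall_ne_add_one (i := 0) fun j _ => hall j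
    have hparts : P.parts = {P.part 0} := by
      refine eq_singleton_iff_unique_mem.2 ⟨P.part_mem.2 (mem_univ 0), fun b hb => ?_⟩
      obtain ⟨x, hx⟩ := P.nonempty_of_mem_parts hb
      rw [← P.part_eq_of_mem hb hx, hconst x 0]
    have huniv : P.part 0 = univ :=
      eq_univ_iff_forall.2 fun x => by rw [hconst 0 x]; exact P.mem_part_self.2 (mem_univ x)
    refine ⟨⟨s(0, Fin.last (n + 2)), by simp [cycleGraph_adj], fun b hb => ?_⟩,
      fun h => (h (by rw [hparts, card_singleton])).elim⟩
    rw [hparts, mem_singleton] at hb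
    rw [hb, huniv, coe_univ, (induceUnivIso _).connected_iff]
    exact cycleGraph_deleteEdges_connected n
  · obtain ⟨i, hi⟩ := not_forall.1 hall
    obtain ⟨j, hji, hj⟩ : ∃ j ≠ i, P.part (j + 1) ≠ P.part j := by
      by_contra! h
      exact hi (Fin.apply_eq_apply_of_forall_ne_add_one h _ _)
    have hdel : ∀ k : Fin (n + 3), P.part (k + 1) ≠ P.part k →
        ∀ b ∈ P.parts, (((cycleGraph (n + 3)).deleteEdges {s(k, k + 1)}).induce b).Connected :=
      fun k hk b hb => by rw [P.induce_deleteEdges_eq_of_part_ne _ hk.symm hb]; exact hconn b hb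
    exact ⟨⟨_, cycleGraph_adj_add_one i, hdel i hi⟩, fun _ =>
      ⟨_, cycleGraph_adj_add_one i, _, cycleGraph_adj_add_one j,
        (Fin.sym2_mk_add_one_injective n).ne hji.symm, hdel i hi, hdel j hj⟩⟩
end

section
/- With the setup of the previous statement (G formed from disjoint G' and G'' joined by the single edge (v,v')): taking the union of the blocks of P' and P'' without merging yields a connected partition of G of size |P'| + |P''|, and conversely every connected partition P of G arises either by merging the v-block and v'-block of its restrictions to V' and V'' or by their disjoint union; i.e., the restriction of any connected partition of G to V' (resp. V'') is a connected partition of G' (resp. G''). -/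
/-! Since `vv'` is the only edge between `A` and `B`, a connected block meeting both sides must
contain that edge. Collapsing the `B`-part of such a block onto `v` then maps it onto its
`A`-part, sending every edge to an edge or to a single vertex, so the `A`-part is connected
(and symmetrically for `B`). -/

namespace Finpartition

variable {α : Type*} [DistribLattice α] [OrderBot α] {a b : α}

lemma disjoint_parts_of_disjoint (P : Finpartition a) (Q : Finpartition b) (hab : Disjoint a b) :
    Disjoint P.parts Q.parts :=
  Finset.disjoint_left.2 fun _ hP hQ ↦
    P.ne_bot hP (disjoint_self.1 (hab.mono (P.le hP) (Q.le hQ)))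

def disjUnion [DecidableEq α] (P : Finpartition a) (Q : Finpartition b) (hab : Disjoint a b) :
    Finpartition (a ⊔ b) where
  parts := P.parts ∪ Q.parts
  supIndep := by
    rw [Finset.supIndep_iff_pairwiseDisjoint, Finset.coe_union]
    refine (Finset.supIndep_iff_pairwiseDisjoint.1 P.supIndep).union
      (Finset.supIndep_iff_pairwiseDisjoint.1 Q.supIndep) fun _ hP _ hQ _ ↦ ?_
    exact hab.mono (P.le hP) (Q.le hQ)
  sup_parts := by rw [Finset.sup_union, P.sup_parts, Q.sup_parts]
  bot_notMem h := (Finset.mem_union.1 h).elim P.bot_notMem Q.bot_notMem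

lemma card_disjUnion_parts [DecidableEq α] (P : Finpartition a) (Q : Finpartition b)
    (hab : Disjoint a b) :
    (P.disjUnion Q hab).parts.card = P.parts.card + Q.parts.card :=
  Finset.card_union_of_disjoint (P.disjoint_parts_of_disjoint Q hab)

end Finpartition

namespace SimpleGraph

variable {V W : Type*} {G : SimpleGraph V} {H : SimpleGraph W}

lemma Reachable.map_of_adj_or_eq {f : V → W}
    (hf : ∀ ⦃x y⦄, G.Adj x y → f x = f y ∨ H.Adj (f x) (f y)) {x y : V}
    (h : G.Reachable x y) : H.Reachable (f x) (f y) := by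
  obtain ⟨p⟩ := h
  induction p with
  | nil => rfl
  | cons hadj _ ih => exact (hf hadj).elim (· ▸ ih) (·.reachable.trans ih)

lemma Connected.of_surjective_of_adj_or_eq {f : V → W} (hsurj : Function.Surjective f)
    (hf : ∀ ⦃x y⦄, G.Adj x y → f x = f y ∨ H.Adj (f x) (f y)) (hG : G.Connected) :
    H.Connected :=
  haveI := hG.nonempty.map f
  ⟨hsurj.forall₂.2 fun x y ↦ (hG x y).map_of_adj_or_eq hf⟩

lemma Preconnected.exists_adj_induce_of_mem_of_notMem {s S : Set V}
    (hs : (G.induce s).Preconnected) {x y : V} (hx : x ∈ s) (hxS : x ∈ S) (hy : y ∈ s)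
    (hyS : y ∉ S) : ∃ a ∈ s, ∃ c ∈ s, a ∈ S ∧ c ∉ S ∧ G.Adj a c := by
  obtain ⟨p⟩ := hs ⟨x, hx⟩ ⟨y, hy⟩
  obtain ⟨d, -, hd₁, hd₂⟩ := p.exists_boundary_dart {z | z.1 ∈ S} hxS hyS
  exact ⟨_, d.fst.2, _, d.snd.2, hd₁, hd₂, d.adj⟩

lemma Connected.induce_inter {s S : Set V} {v : V} (hS : ∀ a ∈ S, ∀ c ∉ S, G.Adj a c → a = v)
    (hs : (G.induce s).Connected) (hsS : (s ∩ S).Nonempty) : (G.induce (s ∩ S)).Connected := by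
  classical
  by_cases hsub : s ⊆ S
  · rwa [Set.inter_eq_left.2 hsub]
  obtain ⟨x, hx, hxS⟩ := hsS
  obtain ⟨y, hy, hyS⟩ := Set.not_subset.1 hsub
  obtain ⟨a, ha, c, hc, haS, hcS, hac⟩ :=
    hs.preconnected.exists_adj_induce_of_mem_of_notMem hx hxS hy hyS
  have hv : v ∈ s ∩ S := hS a haS c hcS hac ▸ ⟨ha, haS⟩
  let r : s → ↥(s ∩ S) := fun z ↦ if hz : z.1 ∈ S then ⟨z, z.2, hz⟩ else ⟨v, hv⟩
  refine hs.of_surjective_of_adj_or_eq (f := r) (fun z ↦ ⟨⟨z, z.2.1⟩, by simp [r, z.2.2]⟩) ?_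
  intro z w hzw
  by_cases hz : z.1 ∈ S <;> by_cases hw : w.1 ∈ S
  · right; simpa [r, hz, hw] using hzw
  · left; simpa [r, hz, hw, Subtype.ext_iff] using hS _ hz _ hw hzw
  · left; simpa [r, hz, hw, Subtype.ext_iff] using (hS _ hw _ hz hzw.symm).symm
  · left; simp [r, hz, hw]

lemma Preconnected.induce_subset_or_subset_compl_or_mem {s S : Set V} {v v' : V}
    (hS : ∀ a ∈ S, ∀ c ∉ S, G.Adj a c → a = v ∧ c = v') (hs : (G.induce s).Preconnected) :
    s ⊆ S ∨ s ⊆ Sᶜ ∨ (v ∈ s ∧ v' ∈ s) := by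
  by_contra! h
  obtain ⟨y, hy, hyS⟩ := Set.not_subset.1 h.1
  obtain ⟨x, hx, hxS⟩ := Set.not_subset.1 h.2.1
  obtain ⟨a, ha, c, hc, haS, hcS, hac⟩ :=
    hs.exists_adj_induce_of_mem_of_notMem hx (not_not.1 hxS) hy hyS
  obtain ⟨rfl, rfl⟩ := hS a haS c hcS hac
  exact h.2.2 ha hc

end SimpleGraph

theorem stmt_14_general {V : Type*} [Fintype V] [DecidableEq V] (G : SimpleGraph V)
    (A B : Finset V) (hdisj : Disjoint A B) (hcover : A ∪ B = Finset.univ)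
    (v v' : V)
    (honly : ∀ a ∈ A, ∀ b ∈ B, G.Adj a b → a = v ∧ b = v') :
    (∀ (P' : Finpartition A) (P'' : Finpartition B),
      (∀ b ∈ P'.parts, (G.induce (b : Set V)).Connected) →
      (∀ b ∈ P''.parts, (G.induce (b : Set V)).Connected) →
      ∃ P : Finpartition (Finset.univ : Finset V),
        P.parts = P'.parts ∪ P''.parts ∧
        (∀ b ∈ P.parts, (G.induce (b : Set V)).Connected) ∧
        P.parts.card = P'.parts.card + P''.parts.card) ∧
    (∀ P : Finpartition (Finset.univ : Finset V),
      (∀ b ∈ P.parts, (G.induce (b : Set V)).Connected) →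
      (∀ b ∈ P.parts, (b ∩ A).Nonempty → (G.induce ((b ∩ A : Finset V) : Set V)).Connected) ∧
      (∀ b ∈ P.parts, (b ∩ B).Nonempty → (G.induce ((b ∩ B : Finset V) : Set V)).Connected) ∧
      (∀ b ∈ P.parts, b ⊆ A ∨ b ⊆ B ∨ (v ∈ b ∧ v' ∈ b))) := by
  have hcompl_A : ∀ x ∉ A, x ∈ B := fun x hx ↦
    (Finset.mem_union.1 (hcover ▸ Finset.mem_univ x)).resolve_left hx
  have hcompl_B : ∀ x ∉ B, x ∈ A := fun x hx ↦
    (Finset.mem_union.1 (hcover ▸ Finset.mem_univ x)).resolve_right hx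
  have hA : ∀ a ∈ (A : Set V), ∀ c ∉ (A : Set V), G.Adj a c → a = v ∧ c = v' :=
    fun a ha c hc h ↦ honly a ha c (hcompl_A c hc) h
  have hB : ∀ a ∈ (B : Set V), ∀ c ∉ (B : Set V), G.Adj a c → a = v' :=
    fun a ha c hc h ↦ (honly c (hcompl_B c hc) a ha h.symm).2
  refine ⟨fun P' P'' hP' hP'' ↦ ⟨(P'.disjUnion P'' hdisj).copy hcover, rfl,
    fun b hb ↦ (Finset.mem_union.1 hb).elim (hP' b) (hP'' b),
    P'.card_disjUnion_parts P'' hdisj⟩, fun P hP ↦ ⟨?_, ?_, ?_⟩⟩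
  · intro b hb hbA
    rw [Finset.coe_inter]
    exact (hP b hb).induce_inter (fun a ha c hc h ↦ (hA a ha c hc h).1)
      (by rwa [← Finset.coe_inter, Finset.coe_nonempty])
  · intro b hb hbB
    rw [Finset.coe_inter]
    exact (hP b hb).induce_inter hB (by rwa [← Finset.coe_inter, Finset.coe_nonempty])
  · intro b hb
    refine ((hP b hb).preconnected.induce_subset_or_subset_compl_or_mem hA).imp
      Finset.coe_subset.1 (Or.imp_left fun h x hx ↦ hcompl_A x (h hx))

/-- Setup as before: `G` is a graph on the disjoint union `A ∪ B` whose only edge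
between `A` and `B` is `(v, v')`.  The disjoint union of connected partitions `P'` of
`A` and `P''` of `B` is a connected partition of `G` of size `|P'| + |P''|`.
Conversely, every connected partition `P` of `G` restricts to connected partitions of
`A` and of `B`, and each of its blocks is contained in `A`, contained in `B`, or
contains both `v` and `v'` (i.e. `P` arises by disjoint union or by merging the
`v`-block with the `v'`-block). -/
theorem stmt_14 {V : Type*} [Fintype V] [DecidableEq V] (G : SimpleGraph V)
    (A B : Finset V) (hdisj : Disjoint A B) (hcover : A ∪ B = Finset.univ)
    (v v' : V) (hv : v ∈ A) (hv' : v' ∈ B) (hadj : G.Adj v v')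
    (honly : ∀ a ∈ A, ∀ b ∈ B, G.Adj a b → a = v ∧ b = v') :
    (∀ (P' : Finpartition A) (P'' : Finpartition B),
      (∀ b ∈ P'.parts, (G.induce (b : Set V)).Connected) →
      (∀ b ∈ P''.parts, (G.induce (b : Set V)).Connected) →
      ∃ P : Finpartition (Finset.univ : Finset V),
        P.parts = P'.parts ∪ P''.parts ∧
        (∀ b ∈ P.parts, (G.induce (b : Set V)).Connected) ∧
        P.parts.card = P'.parts.card + P''.parts.card) ∧
    (∀ P : Finpartition (Finset.univ : Finset V),
      (∀ b ∈ P.parts, (G.induce (b : Set V)).Connected) →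
      (∀ b ∈ P.parts, (b ∩ A).Nonempty → (G.induce ((b ∩ A : Finset V) : Set V)).Connected) ∧
      (∀ b ∈ P.parts, (b ∩ B).Nonempty → (G.induce ((b ∩ B : Finset V) : Set V)).Connected) ∧
      (∀ b ∈ P.parts, b ⊆ A ∨ b ⊆ B ∨ (v ∈ b ∧ v' ∈ b))) :=
  stmt_14_general G A B hdisj hcover v v' honly
end

section
/- Let S ⊆ ℤ be a finite set and d = u − l ≥ 0, and let I(S) be the set of intervals [min(A'), max(A')] over maximal d-consecutive subsets A' of S. Then S contains an element in [l,u] if and only if some interval in I(S) intersects [l,u]. -/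
/-- A finite set of integers is `d`-consecutive if every element other than the maximum
has a strictly larger element at distance at most `d`. -/
def DConsec (d : ℤ) (A : Finset ℤ) : Prop :=
  ∀ a ∈ A, (∃ b ∈ A, a < b) → ∃ a' ∈ A, a < a' ∧ a' - a ≤ d

/-- `A'` is a maximal `d`-consecutive subset of `A`. -/
def MaxDConsec (d : ℤ) (A A' : Finset ℤ) : Prop :=
  A' ⊆ A ∧ DConsec d A' ∧ ∀ B ⊆ A, DConsec d B → A' ⊆ B → B = A'

/-- With `d = u − l`, the finite set `S` contains an element of `[l, u]` iff the
interval `[min A', max A']` of some maximal `d`-consecutive subset `A'` of `S`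
intersects `[l, u]`. -/
theorem stmt_16 (l u : ℤ) (hlu : l ≤ u) (S : Finset ℤ) :
    (∃ x ∈ S, l ≤ x ∧ x ≤ u) ↔
    (∃ A' : Finset ℤ, MaxDConsec (u - l) S A' ∧
      ∃ hne : A'.Nonempty, A'.min' hne ≤ u ∧ l ≤ A'.max' hne) := by
  classical
  constructor
  · rintro ⟨x, hxS, hlx, hxu⟩
    set d := u - l with hd
    let F := S.powerset.filter (fun B => x ∈ B ∧ DConsec d B)
    have hF : ({x} : Finset ℤ) ∈ F := by
      refine Finset.mem_filter.mpr ⟨Finset.mem_powerset.mpr (Finset.singleton_subset_iff.mpr hxS),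
        Finset.mem_singleton_self x, ?_⟩
      intro a ha ⟨b, hb, hab⟩
      simp only [Finset.mem_singleton] at ha hb
      omega
    obtain ⟨A', hA'F, hmax⟩ := F.exists_max_image (fun B => B.card) ⟨_, hF⟩
    rw [Finset.mem_filter, Finset.mem_powerset] at hA'F
    obtain ⟨hsub, hxA', hdc⟩ := hA'F
    have hne : A'.Nonempty := ⟨x, hxA'⟩
    refine ⟨A', ⟨hsub, hdc, ?_⟩, hne, ?_, ?_⟩
    · intro B hB hdcB hAB
      have hBF : B ∈ F := Finset.mem_filter.mpr
        ⟨Finset.mem_powerset.mpr hB, hAB hxA', hdcB⟩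
      exact (Finset.eq_of_subset_of_card_le hAB (hmax B hBF)).symm
    · exact le_trans (A'.min'_le x hxA') hxu
    · exact le_trans hlx (A'.le_max' x hxA')
  · rintro ⟨A', ⟨hsub, hdc, _⟩, hne, hminu, hlmax⟩
    by_cases h1 : l ≤ A'.min' hne
    · exact ⟨A'.min' hne, hsub (A'.min'_mem hne), h1, hminu⟩
    by_cases h2 : A'.max' hne ≤ u
    · exact ⟨A'.max' hne, hsub (A'.max'_mem hne), hlmax, h2⟩
    push_neg at h1 h2
    set T := A'.filter (fun a => a < l) with hT
    have hTne : T.Nonempty :=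
      ⟨A'.min' hne, Finset.mem_filter.mpr ⟨A'.min'_mem hne, h1⟩⟩
    set a := T.max' hTne with ha
    have haT : a ∈ T := T.max'_mem hTne
    have haA : a ∈ A' := (Finset.mem_filter.mp haT).1
    have hal : a < l := (Finset.mem_filter.mp haT).2
    have hmaxgt : a < A'.max' hne := by omega
    obtain ⟨a', ha'A, haa', hda⟩ := hdc a haA ⟨A'.max' hne, A'.max'_mem hne, hmaxgt⟩
    have hla' : l ≤ a' := by
      by_contra h
      push_neg at h
      have : a' ∈ T := Finset.mem_filter.mpr ⟨ha'A, h⟩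
      have := T.le_max' a' this
      omega
    exact ⟨a', hsub ha'A, hla', by omega⟩
end
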